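/- If X is xgamma distributed with parameter θ > 0, then E[e^{tX}] = (θ²/(1+θ))·(1/(θ−t) + θ/(θ−t)³) for all t < θ. -/

import Mathlib

open MeasureTheory Real Set
open scoped Nat

lemma integrableOn_pow_mul_exp_neg_mul_Ioi (n : ℕ) {r : ℝ} (hr : 0 < r) :
    IntegrableOn (fun x : ℝ => x ^ n * exp (-(r * x))) (Ioi 0) := by
  have hn : (-1 : ℝ) < n := neg_one_lt_zero.trans_le n.cast_nonneg
  refine (integrableOn_rpow_mul_exp_neg_mul_rpow hn one_pos hr).congr_fun (fun x _ => ?_)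
    measurableSet_Ioi
  simp only [rpow_natCast, rpow_one, neg_mul]

lemma integral_pow_mul_exp_neg_mul_Ioi (n : ℕ) {r : ℝ} (hr : 0 < r) :
    ∫ x in Ioi (0 : ℝ), x ^ n * exp (-(r * x)) = n ! / r ^ (n + 1) := by
  have h := integral_rpow_mul_exp_neg_mul_Ioi (a := n + 1) n.cast_add_one_pos hr
  rw [add_sub_cancel_right, Gamma_nat_eq_factorial, ← Nat.cast_add_one, rpow_natCast,
    one_div_pow] at h
  simp only [rpow_natCast] at h
  rw [h, one_div_mul_eq_div]

theorem xgamma_mgf_general (θ t : ℝ) (ht : t < θ) :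
    ∫ x in Set.Ioi (0:ℝ),
        Real.exp (t * x) * ((θ^2 / (1 + θ)) * (1 + (θ/2) * x^2) * Real.exp (-θ * x)) =
      (θ^2 / (1 + θ)) * (1 / (θ - t) + θ / (θ - t)^3) := by
  set c := θ ^ 2 / (1 + θ)
  have hs : 0 < θ - t := sub_pos.mpr ht
  have integrand (x : ℝ) :
      exp (t * x) * (c * (1 + (θ / 2) * x ^ 2) * exp (-θ * x)) =
        c * (x ^ 0 * exp (-((θ - t) * x))) + c * (θ / 2) * (x ^ 2 * exp (-((θ - t) * x))) := by
    rw [show -((θ - t) * x) = t * x + -θ * x by ring, exp_add]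
    ring
  simp_rw [integrand]
  rw [integral_add ((integrableOn_pow_mul_exp_neg_mul_Ioi 0 hs).const_mul _)
      ((integrableOn_pow_mul_exp_neg_mul_Ioi 2 hs).const_mul _),
    integral_const_mul, integral_const_mul, integral_pow_mul_exp_neg_mul_Ioi 0 hs,
    integral_pow_mul_exp_neg_mul_Ioi 2 hs]
  norm_num
  ring

theorem xgamma_mgf (θ t : ℝ) (hθ : 0 < θ) (ht : t < θ) :
    ∫ x in Set.Ioi (0:ℝ),
        Real.exp (t * x) * ((θ^2 / (1 + θ)) * (1 + (θ/2) * x^2) * Real.exp (-θ * x)) =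
      (θ^2 / (1 + θ)) * (1 / (θ - t) + θ / (θ - t)^3) :=
  xgamma_mgf_general θ t ht
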